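/- arXiv:2408.05486 — 2 statements merged into one kernel-verified Lean document; each statement's English description precedes it below -/
import Mathlib

section
/- If 𝒳 is a connected combinatorial complex and ρ : 𝒳̃ → 𝒳 is a CC covering, then all fibers of ρ have the same size; namely |ρ⁻¹(x)| = |𝒳̃₀| / |𝒳₀| for every cell x of 𝒳, where 𝒳̃₀ and 𝒳₀ denote the sets of 0-cells of 𝒳̃ and 𝒳. -/
/-! Basic framework: combinatorial complexes, natural neighborhood functions,
CC coverings, Hasse graphs, and higher-order message-passing (HOMP) models. -/

namespace TDL

/-- The raw data of a combinatorial complex over an ambient node type `S`: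
a set of cells (finite, nonempty subsets of nodes) and a rank function. -/
structure PreCC (S : Type*) where
  cells : Set (Finset S)
  rk : Finset S → ℕ

/-- A (featureless) combinatorial complex.  The node set is implicitly the set of
elements appearing in cells; every singleton of such a node is a cell of rank `0`,
cells are nonempty, there are finitely many cells, and the rank function is
monotone with respect to inclusion. -/
structure CC (S : Type*) extends PreCC S where
  cells_finite : cells.Finite
  nonempty_of_mem : ∀ x ∈ cells, x.Nonempty
  singleton_mem : ∀ x ∈ cells, ∀ s ∈ x, ({s} : Finset S) ∈ cells
  rk_singleton : ∀ s : S, ({s} : Finset S) ∈ cells → rk {s} = 0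
  rk_mono : ∀ x ∈ cells, ∀ y ∈ cells, x ⊆ y → rk x ≤ rk y

/-- Names of the natural neighborhood functions: `(r₁,r₂)`-adjacency,
coadjacency, incidence and co-incidence. -/
inductive NbhdKind : Type
  | adj (r₁ r₂ : ℕ)
  | coadj (r₁ r₂ : ℕ)
  | inc (r₁ r₂ : ℕ)
  | coinc (r₁ r₂ : ℕ)
  deriving DecidableEq

/-- The two ranks mentioned by a neighborhood kind are bounded by `ℓ`. -/
def NbhdKind.bounded (ℓ : ℕ) : NbhdKind → Prop
  | .adj r₁ r₂ => r₁ ≤ ℓ ∧ r₂ ≤ ℓ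
  | .coadj r₁ r₂ => r₁ ≤ ℓ ∧ r₂ ≤ ℓ
  | .inc r₁ r₂ => r₁ ≤ ℓ ∧ r₂ ≤ ℓ
  | .coinc r₁ r₂ => r₁ ≤ ℓ ∧ r₂ ≤ ℓ

namespace PreCC

variable {S : Type*}

/-- The `r`-skeleton: the set of cells of rank `r`. -/
def skel (X : PreCC S) (r : ℕ) : Set (Finset S) := {x | x ∈ X.cells ∧ X.rk x = r}

/-- The natural neighborhood functions of a complex. -/
def nbhd (X : PreCC S) : NbhdKind → Finset S → Set (Finset S)
  | .adj r₁ r₂, x => {y | x ∈ X.skel r₁ ∧ y ∈ X.skel r₁ ∧ ∃ z ∈ X.skel r₂, x ⊆ z ∧ y ⊆ z}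
  | .coadj r₁ r₂, x => {y | x ∈ X.skel r₁ ∧ y ∈ X.skel r₁ ∧ ∃ z ∈ X.skel r₂, z ⊆ x ∧ z ⊆ y}
  | .inc r₁ r₂, x => {y | x ∈ X.skel r₁ ∧ y ∈ X.skel r₂ ∧ x ⊆ y}
  | .coinc r₁ r₂, x => {y | x ∈ X.skel r₁ ∧ y ∈ X.skel r₂ ∧ y ⊆ x}

/-- The Hasse graph of a complex: vertices are cells, and `x, y` are joined by an
edge whenever `x ⊆ y` and `rk x = rk y - 1` (or symmetrically). -/
def hasse (X : PreCC S) : SimpleGraph {x : Finset S // x ∈ X.cells} where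
  Adj a b := (a.1 ⊆ b.1 ∧ X.rk a.1 + 1 = X.rk b.1) ∨ (b.1 ⊆ a.1 ∧ X.rk b.1 + 1 = X.rk a.1)
  symm := by
    constructor
    rintro a b (h | h)
    · exact Or.inr h
    · exact Or.inl h
  loopless := ⟨by rintro a (⟨-, h⟩ | ⟨-, h⟩) <;> omega⟩

end PreCC

/-- `ρ` is a CC covering of `X` by `Xt`: it maps cells of `Xt` to cells of `X`
surjectively, preserves ranks, and is a local isomorphism with respect to every
natural neighborhood function. -/
structure IsCovering {S' S : Type*} (Xt : PreCC S') (X : PreCC S)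
    (ρ : Finset S' → Finset S) : Prop where
  mem : ∀ x' ∈ Xt.cells, ρ x' ∈ X.cells
  surj : ∀ x ∈ X.cells, ∃ x' ∈ Xt.cells, ρ x' = x
  rank : ∀ x' ∈ Xt.cells, X.rk (ρ x') = Xt.rk x'
  locBij : ∀ x' ∈ Xt.cells, ∀ N : NbhdKind, Set.BijOn ρ (Xt.nbhd N x') (X.nbhd N (ρ x'))

open Classical in
/-- The multiset underlying a finite set (junk value `0` for infinite sets). -/
noncomputable def setMultiset {α : Type*} (s : Set α) : Multiset α :=
  if h : s.Finite then h.toFinset.val else 0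

/-- A higher-order message-passing (HOMP) model over a feature space `D`, for
featureless complexes of dimension at most `ℓ`: a number of layers `T`, an initial
constant feature, and, per layer, message functions (per neighborhood function and
rank), permutation-invariant aggregations (functions of multisets), a combination
operator over the family of neighborhood functions with ranks at most `ℓ`,
activations, and a readout defined on multisets. -/
structure HOMP (D : Type*) (ℓ : ℕ) where
  T : ℕ
  init : D
  msg : ℕ → NbhdKind → ℕ → D → D → D
  agg : ℕ → NbhdKind → Multiset D → D
  comb : ℕ → ({N : NbhdKind // N.bounded ℓ} → D) → D
  act : ℕ → D → D
  readout : Multiset D → D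

namespace HOMP

variable {D : Type*} {ℓ : ℕ} {S : Type*}

/-- The cell feature maps computed by a HOMP model on a complex:
`h⁰_x` is the initial constant, and
`h^{t+1}_x = β_t (⊗_N (⊕ {{ m_{t,N,rk x}(h^t_x, h^t_y) : y ∈ N(x) }}))`. -/
noncomputable def feat (M : HOMP D ℓ) (X : PreCC S) : ℕ → Finset S → D
  | 0, _ => M.init
  | t + 1, x =>
      M.act t <| M.comb t fun N =>
        M.agg t N.1 <|
          (setMultiset (X.nbhd N.1 x)).map fun y =>
            M.msg t N.1 (X.rk x) (M.feat X t x) (M.feat X t y)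

/-- The output of a HOMP model: the readout of the multiset of final features. -/
noncomputable def out (M : HOMP D ℓ) (X : PreCC S) : D :=
  M.readout <| (setMultiset X.cells).map fun x => M.feat X M.T x

end HOMP

end TDL

/-! Nested cells `a ⊆ b` of the base have fibers in bijection: by the local bijectivity of
`ρ` on incidence (resp. co-incidence) neighbourhoods, every lift of `a` lies in exactly one
lift of `b`, and every lift of `b` contains exactly one lift of `a`. Along Hasse paths all
fibers therefore have a common size `c`, and counting the `0`-cells of the cover fiberwise
gives `|Xt₀| = c · |X₀|`, where `X₀` is nonempty. -/

theorem Set.ncard_eq_of_existsUnique_rel {α β : Type*} {s : Set α} {t : Set β}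
    (R : α → β → Prop) (hs : ∀ a ∈ s, ∃! b, b ∈ t ∧ R a b)
    (ht : ∀ b ∈ t, ∃! a, a ∈ s ∧ R a b) : s.ncard = t.ncard := by
  choose f hf hf_unique using hs
  refine Set.ncard_congr f (fun a ha => (hf a ha).1) (fun a a' ha ha' heq => ?_) fun b hb => ?_
  · obtain ⟨c, -, hc⟩ := ht (f a ha) (hf a ha).1
    exact (hc a ⟨ha, (hf a ha).2⟩).trans (hc a' ⟨ha', heq ▸ (hf a' ha').2⟩).symm
  · obtain ⟨a, ⟨ha, hab⟩, -⟩ := ht b hb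
    exact ⟨a, ha, (hf_unique a ha b ⟨hb, hab⟩).symm⟩

theorem Set.ncard_eq_mul_of_ncard_fiber {α β : Type*} {s : Set α} {t : Set β} {f : α → β}
    {c : ℕ} (hs : s.Finite) (ht : t.Finite) (hst : Set.MapsTo f s t)
    (hc : ∀ b ∈ t, {a ∈ s | f a = b}.ncard = c) : s.ncard = c * t.ncard := by
  classical
  have hst' : Set.MapsTo f (hs.toFinset : Set α) ht.toFinset := by simpa using hst
  rw [Set.ncard_eq_toFinset_card s hs, Set.ncard_eq_toFinset_card t ht,
    Finset.card_eq_sum_card_fiberwise hst', mul_comm, ← smul_eq_mul, ← Finset.sum_const]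
  refine Finset.sum_congr rfl fun b hb => ?_
  rw [← hc b (ht.mem_toFinset.mp hb), ← Set.ncard_coe_finset]
  congr 1
  ext a
  simp

namespace TDL

variable {S' S : Type*}

def fiber (Xt : PreCC S') (ρ : Finset S' → Finset S) (x : Finset S) : Set (Finset S') :=
  {x' ∈ Xt.cells | ρ x' = x}

namespace IsCovering

variable {Xt : PreCC S'} {X : PreCC S} {ρ : Finset S' → Finset S}

theorem mem_skel_of_mem_fiber (hρ : IsCovering Xt X ρ) {x : Finset S} {x' : Finset S'}
    (hx' : x' ∈ fiber Xt ρ x) : x' ∈ Xt.skel (X.rk x) :=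
  ⟨hx'.1, by rw [← hρ.rank x' hx'.1, hx'.2]⟩

theorem existsUnique_superset_mem_fiber (hρ : IsCovering Xt X ρ) {a b : Finset S}
    (ha : a ∈ X.cells) (hb : b ∈ X.cells) (hab : a ⊆ b) {a' : Finset S'}
    (ha' : a' ∈ fiber Xt ρ a) : ∃! b', b' ∈ fiber Xt ρ b ∧ a' ⊆ b' := by
  have hbij := hρ.locBij a' ha'.1 (.inc (X.rk a) (X.rk b))
  have hb_inc : b ∈ X.nbhd (.inc (X.rk a) (X.rk b)) (ρ a') := by
    rw [ha'.2]
    exact ⟨⟨ha, rfl⟩, ⟨hb, rfl⟩, hab⟩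
  have h_inc : ∀ b' ∈ fiber Xt ρ b, a' ⊆ b' → b' ∈ Xt.nbhd (.inc (X.rk a) (X.rk b)) a' :=
    fun b' hb' hab' => ⟨hρ.mem_skel_of_mem_fiber ha', hρ.mem_skel_of_mem_fiber hb', hab'⟩
  obtain ⟨b', ⟨-, hb'_skel, hab'⟩, hb'⟩ := hbij.surjOn hb_inc
  refine ⟨b', ⟨⟨hb'_skel.1, hb'⟩, hab'⟩, fun b'' ⟨hb'', hab''⟩ => ?_⟩
  exact hbij.injOn (h_inc b'' hb'' hab'') (h_inc b' ⟨hb'_skel.1, hb'⟩ hab')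
    (hb''.2.trans hb'.symm)

theorem existsUnique_subset_mem_fiber (hρ : IsCovering Xt X ρ) {a b : Finset S}
    (ha : a ∈ X.cells) (hb : b ∈ X.cells) (hab : a ⊆ b) {b' : Finset S'}
    (hb' : b' ∈ fiber Xt ρ b) : ∃! a', a' ∈ fiber Xt ρ a ∧ a' ⊆ b' := by
  have hbij := hρ.locBij b' hb'.1 (.coinc (X.rk b) (X.rk a))
  have ha_coinc : a ∈ X.nbhd (.coinc (X.rk b) (X.rk a)) (ρ b') := by
    rw [hb'.2]
    exact ⟨⟨hb, rfl⟩, ⟨ha, rfl⟩, hab⟩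
  have h_coinc :
      ∀ a' ∈ fiber Xt ρ a, a' ⊆ b' → a' ∈ Xt.nbhd (.coinc (X.rk b) (X.rk a)) b' :=
    fun a' ha' hab' => ⟨hρ.mem_skel_of_mem_fiber hb', hρ.mem_skel_of_mem_fiber ha', hab'⟩
  obtain ⟨a', ⟨-, ha'_skel, hab'⟩, ha'⟩ := hbij.surjOn ha_coinc
  refine ⟨a', ⟨⟨ha'_skel.1, ha'⟩, hab'⟩, fun a'' ⟨ha'', hab''⟩ => ?_⟩
  exact hbij.injOn (h_coinc a'' ha'' hab'') (h_coinc a' ⟨ha'_skel.1, ha'⟩ hab')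
    (ha''.2.trans ha'.symm)

theorem ncard_fiber_eq_of_subset (hρ : IsCovering Xt X ρ) {a b : Finset S}
    (ha : a ∈ X.cells) (hb : b ∈ X.cells) (hab : a ⊆ b) :
    (fiber Xt ρ a).ncard = (fiber Xt ρ b).ncard :=
  Set.ncard_eq_of_existsUnique_rel (· ⊆ ·)
    (fun _ => hρ.existsUnique_superset_mem_fiber ha hb hab)
    (fun _ => hρ.existsUnique_subset_mem_fiber ha hb hab)

theorem ncard_fiber_eq_of_reachable (hρ : IsCovering Xt X ρ) {a b : {x // x ∈ X.cells}}
    (h : X.hasse.Reachable a b) : (fiber Xt ρ a).ncard = (fiber Xt ρ b).ncard := by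
  obtain ⟨w⟩ := h
  induction w with
  | nil => rfl
  | @cons u v _ huv _ ih =>
    refine Eq.trans ?_ ih
    rcases huv with ⟨huv, -⟩ | ⟨hvu, -⟩
    · exact hρ.ncard_fiber_eq_of_subset u.2 v.2 huv
    · exact (hρ.ncard_fiber_eq_of_subset v.2 u.2 hvu).symm

theorem image_skel (hρ : IsCovering Xt X ρ) (r : ℕ) : ρ '' Xt.skel r = X.skel r := by
  ext x
  constructor
  · rintro ⟨x', ⟨hx', rfl⟩, rfl⟩
    exact ⟨hρ.mem x' hx', hρ.rank x' hx'⟩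
  · rintro ⟨hx, rfl⟩
    obtain ⟨x', hx', rfl⟩ := hρ.surj x hx
    exact ⟨x', ⟨hx', (hρ.rank x' hx').symm⟩, rfl⟩

theorem ncard_skel_eq_mul (hρ : IsCovering Xt X ρ) (hfin : Xt.cells.Finite) {r c : ℕ}
    (hc : ∀ x ∈ X.skel r, (fiber Xt ρ x).ncard = c) :
    (Xt.skel r).ncard = c * (X.skel r).ncard := by
  have hfin_skel : (Xt.skel r).Finite := hfin.subset fun _ h => h.1
  refine Set.ncard_eq_mul_of_ncard_fiber hfin_skel (hρ.image_skel r ▸ hfin_skel.image ρ)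
    (hρ.image_skel r ▸ Set.mapsTo_image ρ _) fun x hx => ?_
  rw [← hc x hx]
  congr 1
  ext x'
  exact ⟨fun ⟨hx', hρx'⟩ => ⟨hx'.1, hρx'⟩,
    fun hx' => ⟨hx.2 ▸ hρ.mem_skel_of_mem_fiber hx', hx'.2⟩⟩

end IsCovering

theorem CC.skel_zero_nonempty (X : CC S) {x : Finset S} (hx : x ∈ X.cells) :
    (X.toPreCC.skel 0).Nonempty := by
  obtain ⟨s, hs⟩ := X.nonempty_of_mem x hx
  have hs_mem := X.singleton_mem x hx s hs
  exact ⟨{s}, hs_mem, X.rk_singleton s hs_mem⟩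

/-- If `X` is a connected combinatorial complex and `ρ : Xt → X` is a CC
covering, then all fibers of `ρ` have the same size, namely
`|ρ⁻¹(x)| = |Xt₀| / |X₀|` for every cell `x` of `X`, where `Xt₀` and `X₀` are the
sets of `0`-cells. -/
theorem covering_fiber_card
    {S' S : Type} (Xt : CC S') (X : CC S) (ρ : Finset S' → Finset S)
    (hconn : X.toPreCC.hasse.Connected)
    (hρ : IsCovering Xt.toPreCC X.toPreCC ρ)
    (x : Finset S) (hx : x ∈ X.cells) :
    {x' ∈ Xt.cells | ρ x' = x}.ncard
      = (Xt.toPreCC.skel 0).ncard / (X.toPreCC.skel 0).ncard := by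
  have hconst : ∀ y ∈ X.toPreCC.skel 0,
      (fiber Xt.toPreCC ρ y).ncard = (fiber Xt.toPreCC ρ x).ncard :=
    fun y hy => hρ.ncard_fiber_eq_of_reachable (hconn.preconnected ⟨y, hy.1⟩ ⟨x, hx⟩)
  have hpos : 0 < (X.toPreCC.skel 0).ncard :=
    (Set.ncard_pos (X.cells_finite.subset fun _ h => h.1)).mpr (X.skel_zero_nonempty hx)
  rw [hρ.ncard_skel_eq_mul Xt.cells_finite hconst, Nat.mul_div_cancel _ hpos]
  rfl

end TDL
end

section
/- If T_{p₁,…,p_ℓ} and T_{p'₁,…,p'_ℓ} are ℓ-dimensional torus CCs such that p₁⋯p_ℓ = p'₁⋯p'_ℓ (equal numbers of 0-cells) and p_j ≥ 3, p'_j ≥ 3 for all j ∈ {1,…,ℓ}, then for every HOMP model M, M(T_{p₁,…,p_ℓ}) = M(T_{p'₁,…,p'_ℓ}). -/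
namespace TDL

/-- The cell `s_k` of the `ℓ`-dimensional torus: the set of nodes `s + k'` for
`k' ≤ k`, with coordinatewise addition modulo `p j`. -/
def torusCell {ℓ : ℕ} (p : Fin ℓ → ℕ) (s : ∀ i, ZMod (p i)) (k : Fin ℓ → Bool) :
    Finset (∀ i, ZMod (p i)) :=
  (Finset.univ.filter fun k' : Fin ℓ → Bool => ∀ i, k' i = true → k i = true).image
    fun k' i => s i + if k' i then 1 else 0

/-- The number of ones in `k ∈ {0,1}^ℓ`, i.e. the rank of the cell `s_k`. -/
def torusRank {ℓ : ℕ} (k : Fin ℓ → Bool) : ℕ :=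
  (Finset.univ.filter fun i => k i = true).card

/-- The `ℓ`-dimensional torus combinatorial complex `T_{p₁,…,p_ℓ}`: nodes are
`ℤ/p₁ × ⋯ × ℤ/p_ℓ`, cells are the sets `s_k`, and the rank of `s_k` is
`k₁ + ⋯ + k_ℓ`. -/
noncomputable def torusPre {ℓ : ℕ} (p : Fin ℓ → ℕ) : PreCC (∀ i, ZMod (p i)) where
  cells := {x | ∃ s k, x = torusCell p s k}
  rk x := sInf {r | ∃ s k, x = torusCell p s k ∧ r = torusRank k}

end TDL

/-!
If every `p i ≥ 3`, the offsets `-1, 0, 1` stay distinct modulo `p i`, so around any cell `s_k`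
a torus looks like the integer grid: each neighborhood of `s_k` is the image, under
`q ↦ s + q`, of a set `localNbhd N k` of offset cells that depends only on `N` and `k`. Hence
"same direction vector `k`" is a rank-preserving relation along which all neighborhoods
correspond bijectively, and by induction on the layers every HOMP model gives all cells with the
same `k` the same features, in both tori. Each torus has, for every `k`, exactly `p₁⋯p_ℓ` cells
`s_k`, so the multisets of final features agree.
-/

theorem ZMod.intCast_eq_intCast_iff_of_abs_sub_lt {n : ℕ} {a b : ℤ} (h : |a - b| < n) :
    (a : ZMod n) = b ↔ a = b := by
  rw [ZMod.intCast_eq_intCast_iff_dvd_sub]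
  refine ⟨fun hd => ?_, fun hab => by simp [hab]⟩
  have := Int.eq_zero_of_abs_lt_dvd hd (by rwa [abs_sub_comm])
  omega

theorem Fintype.piFinset_subset_piFinset_iff {ι : Type*} [DecidableEq ι] [Fintype ι]
    {δ : ι → Type*} {t₁ t₂ : ∀ i, Finset (δ i)} (ht₁ : ∀ i, (t₁ i).Nonempty) :
    Fintype.piFinset t₁ ⊆ Fintype.piFinset t₂ ↔ ∀ i, t₁ i ⊆ t₂ i := by
  refine ⟨fun h i x hx => ?_, Fintype.piFinset_subset t₁ t₂⟩
  choose f hf using ht₁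
  have hmem : Function.update f i x ∈ Fintype.piFinset t₁ :=
    Fintype.mem_piFinset.2 fun j => by
      rcases eq_or_ne j i with rfl | hj
      · simpa using hx
      · simpa [hj] using hf j
  simpa using Fintype.mem_piFinset.1 (h hmem) i

namespace TDL

open Function Set

theorem PreCC.nbhd_subset_cells {S : Type*} (X : PreCC S) (N : NbhdKind) (x : Finset S) :
    X.nbhd N x ⊆ X.cells := by
  cases N <;> exact fun y hy => hy.2.1.1

theorem mem_setMultiset {α : Type*} {s : Set α} (hs : s.Finite) {a : α} :
    a ∈ setMultiset s ↔ a ∈ s := by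
  classical
  rw [setMultiset, dif_pos hs, Finset.mem_val, Finite.mem_toFinset]

theorem setMultiset_image {α β : Type*} {f : α → β} {s : Set α} (hs : s.Finite)
    (hf : InjOn f s) : setMultiset (f '' s) = (setMultiset s).map f := by
  classical
  rw [setMultiset, setMultiset, dif_pos hs, dif_pos (hs.image f),
    Finite.toFinset_image f hs (hs.image f)]
  exact Finset.image_val_of_injOn (by rwa [Finite.coe_toFinset])

def MatchedAlong {α β : Type*} (R : α → β → Prop) (A : Set α) (B : Set β) : Prop :=
  ∃ f : α → β, BijOn f A B ∧ ∀ a ∈ A, R a (f a)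

theorem matchedAlong_image {ι α β : Type*} [Nonempty ι] {R : α → β → Prop} {g : ι → α}
    {g' : ι → β} {C : Set ι} (hg : InjOn g C) (hg' : InjOn g' C)
    (hR : ∀ c ∈ C, R (g c) (g' c)) : MatchedAlong R (g '' C) (g' '' C) := by
  have hinv : ∀ c ∈ C, invFunOn g C (g c) = c := fun c hc => hg.leftInvOn_invFunOn hc
  refine ⟨g' ∘ invFunOn g C, ⟨?_, ?_, ?_⟩, ?_⟩
  · rintro _ ⟨c, hc, rfl⟩
    exact ⟨c, hc, by simp [hinv c hc]⟩
  · rintro _ ⟨c₁, hc₁, rfl⟩ _ ⟨c₂, hc₂, rfl⟩ h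
    simp only [comp_apply, hinv c₁ hc₁, hinv c₂ hc₂] at h
    rw [hg' hc₁ hc₂ h]
  · rintro _ ⟨c, hc, rfl⟩
    exact ⟨g c, mem_image_of_mem g hc, by simp [hinv c hc]⟩
  · rintro _ ⟨c, hc, rfl⟩
    simpa [hinv c hc] using hR c hc

theorem MatchedAlong.map_setMultiset {α β γ : Type*} {R : α → β → Prop} {A : Set α}
    {B : Set β} (hAB : MatchedAlong R A B) (hA : A.Finite) {F : α → γ} {F' : β → γ}
    (hF : ∀ a ∈ A, ∀ b, R a b → F a = F' b) :
    (setMultiset A).map F = (setMultiset B).map F' := by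
  obtain ⟨f, hf, hR⟩ := hAB
  rw [← hf.image_eq, setMultiset_image hA hf.injOn, Multiset.map_map]
  refine Multiset.map_congr rfl fun a ha => ?_
  rw [mem_setMultiset hA] at ha
  exact hF a ha (f a) (hR a ha)

def IsLocalBisimulation {S S' : Type*} (X : PreCC S) (X' : PreCC S')
    (R : Finset S → Finset S' → Prop) : Prop :=
  ∀ x x', R x x' → X.rk x = X'.rk x' ∧ ∀ N, MatchedAlong R (X.nbhd N x) (X'.nbhd N x')

namespace HOMP

variable {D S S' : Type*} {ℓ : ℕ} {X : PreCC S} {X' : PreCC S'}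
  {R : Finset S → Finset S' → Prop}

theorem feat_eq_of_isLocalBisimulation (M : HOMP D ℓ) (hX : X.cells.Finite)
    (hR : IsLocalBisimulation X X' R) (t : ℕ) {x : Finset S} {x' : Finset S'}
    (hxx' : R x x') : M.feat X t x = M.feat X' t x' := by
  induction t generalizing x x' with
  | zero => rfl
  | succ t ih =>
    obtain ⟨hrk, hnbhd⟩ := hR x x' hxx'
    simp only [feat, hrk, ih hxx']
    congr 2
    funext N
    congr 1
    exact (hnbhd N.1).map_setMultiset (hX.subset (X.nbhd_subset_cells N.1 x))
      fun y _ y' hyy' => by rw [ih hyy']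

theorem out_eq_of_isLocalBisimulation (M : HOMP D ℓ) (hX : X.cells.Finite)
    (hR : IsLocalBisimulation X X' R) (hcells : MatchedAlong R X.cells X'.cells) :
    M.out X = M.out X' := by
  rw [out, out, hcells.map_setMultiset hX fun x _ x' hxx' =>
    M.feat_eq_of_isLocalBisimulation hX hR M.T hxx']

end HOMP

def seg {n : ℕ} (a : ZMod n) (b : Bool) : Finset (ZMod n) :=
  if b then {a, a + 1} else {a}

theorem mem_seg {n : ℕ} {x a : ZMod n} {b : Bool} : x ∈ seg a b ↔ x = a ∨ (b ∧ x = a + 1) := by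
  cases b <;> simp [seg]

/-- `seg a b ⊆ seg c d`, spelled out (`seg_subset_seg_iff`); stated over any `G` so that it also
applies to integer offsets. -/
def SegLE {G : Type*} [Add G] [One G] (a : G) (b : Bool) (c : G) (d : Bool) : Prop :=
  (b → d) ∧ (a = c ∨ (d ∧ ¬b ∧ a = c + 1))

section SegLE

variable {G : Type*} {a c : G} {b d : Bool}

theorem SegLE.antisymm [Add G] [One G] (h : SegLE a b c d) (h' : SegLE c d a b) :
    a = c ∧ b = d := by
  obtain ⟨hbd, rfl | ⟨hd, hb, -⟩⟩ := h
  · exact ⟨rfl, by cases b <;> cases d <;> simp_all [SegLE]⟩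
  · cases b <;> cases d <;> simp_all [SegLE]

theorem SegLE.exists_eq_add_intCast [AddGroupWithOne G] (h : SegLE a b c d) :
    ∃ e : ℤ, (0 ≤ e ∧ e ≤ 1) ∧ a = c + e := by
  obtain ⟨-, rfl | ⟨-, -, rfl⟩⟩ := h
  · exact ⟨0, by norm_num, by simp⟩
  · exact ⟨1, by norm_num, by simp⟩

theorem SegLE.int_bounds {a c : ℤ} (h : SegLE a b c d) : c ≤ a ∧ a ≤ c + 1 := by
  obtain ⟨e, he, rfl⟩ := h.exists_eq_add_intCast
  simp only [Int.cast_id]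
  omega

theorem segLE_add_intCast_iff {n : ℕ} (hn : 2 ≤ n) (s : ZMod n) {a c : ℤ}
    (h : c ≤ a ∧ a ≤ c + 1) : SegLE (s + a) b (s + c) d ↔ SegLE a b c d := by
  have cancel : ∀ e : ℤ, a - e ≤ 1 → e - a ≤ 1 → ((s + a = s + e) ↔ a = e) := fun e he he' => by
    rw [add_right_inj,
      ZMod.intCast_eq_intCast_iff_of_abs_sub_lt (abs_sub_lt_iff.2 ⟨by omega, by omega⟩)]
  have hc : s + (c : ZMod n) + 1 = s + ((c + 1 : ℤ) : ZMod n) := by push_cast; ring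
  rw [SegLE, SegLE, hc, cancel c (by omega) (by omega), cancel (c + 1) (by omega) (by omega)]

theorem seg_subset_seg_iff {n : ℕ} (hn : 3 ≤ n) {a c : ZMod n} :
    seg a b ⊆ seg c d ↔ SegLE a b c d := by
  have add_ne_self : ∀ (m : ℤ) (x : ZMod n), 0 < m → m < n → x + m ≠ x := fun m x hm hmn h => by
    have := (ZMod.intCast_eq_intCast_iff_of_abs_sub_lt (a := m) (b := 0)
      (by rwa [sub_zero, abs_of_pos hm])).1 (by simpa using h)
    omega
  have hne1 (x : ZMod n) : x + 1 ≠ x := by simpa using add_ne_self 1 x one_pos (by omega)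
  have hne2 (x : ZMod n) : x + 1 + 1 ≠ x := by
    simpa [add_assoc, one_add_one_eq_two] using add_ne_self 2 x two_pos (by omega)
  cases b <;> cases d <;>
    simp only [seg, SegLE, ↓reduceIte, Bool.false_eq_true, Finset.insert_subset_iff,
      Finset.singleton_subset_iff, Finset.mem_insert, Finset.mem_singleton] <;> grind

end SegLE

section

variable {ℓ : ℕ} {p p' : Fin ℓ → ℕ}

theorem torusCell_eq_piFinset (s : ∀ i, ZMod (p i)) (k : Fin ℓ → Bool) :
    torusCell p s k = Fintype.piFinset fun i => seg (s i) (k i) := by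
  ext v
  simp only [torusCell, Finset.mem_image, Finset.mem_filter, Finset.mem_univ, true_and,
    Fintype.mem_piFinset, mem_seg]
  constructor
  · rintro ⟨k', hk', rfl⟩ i
    cases hi : k' i <;> simp [hk' i, hi]
  · intro hv
    refine ⟨fun i => decide (v i ≠ s i), fun i hi => ?_, funext fun i => ?_⟩ <;>
      rcases hv i with h | ⟨hk, h⟩ <;> simp_all

theorem torusCell_subset_torusCell_iff (hp : ∀ i, 3 ≤ p i) {s t : ∀ i, ZMod (p i)}
    {k m : Fin ℓ → Bool} :
    torusCell p s k ⊆ torusCell p t m ↔ ∀ i, SegLE (s i) (k i) (t i) (m i) := by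
  rw [torusCell_eq_piFinset, torusCell_eq_piFinset,
    Fintype.piFinset_subset_piFinset_iff fun i => by cases k i <;> simp [seg]]
  exact forall_congr' fun i => seg_subset_seg_iff (hp i)

theorem torusCell_inj (hp : ∀ i, 3 ≤ p i) {s t : ∀ i, ZMod (p i)} {k m : Fin ℓ → Bool} :
    torusCell p s k = torusCell p t m ↔ s = t ∧ k = m := by
  refine ⟨fun h => ?_, fun ⟨hs, hk⟩ => hs ▸ hk ▸ rfl⟩
  have hle := (torusCell_subset_torusCell_iff hp).1 h.le
  have hge := (torusCell_subset_torusCell_iff hp).1 h.ge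
  exact ⟨funext fun i => ((hle i).antisymm (hge i)).1,
    funext fun i => ((hle i).antisymm (hge i)).2⟩

theorem torusCell_injective (hp : ∀ i, 3 ≤ p i) :
    Injective fun sk : (∀ i, ZMod (p i)) × (Fin ℓ → Bool) => torusCell p sk.1 sk.2 :=
  fun _ _ h => Prod.ext_iff.2 ((torusCell_inj hp).1 h)

theorem torusPre_cells (p : Fin ℓ → ℕ) :
    (torusPre p).cells = range fun sk : (∀ i, ZMod (p i)) × (Fin ℓ → Bool) =>
      torusCell p sk.1 sk.2 := by
  ext x
  simp [torusPre, eq_comm]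

theorem rk_torusCell (hp : ∀ i, 3 ≤ p i) (s : ∀ i, ZMod (p i)) (k : Fin ℓ → Bool) :
    (torusPre p).rk (torusCell p s k) = torusRank k := by
  have : {r | ∃ t m, torusCell p s k = torusCell p t m ∧ r = torusRank m} = {torusRank k} := by
    ext r
    simp only [mem_singleton_iff, torusCell_inj hp]
    constructor
    · rintro ⟨t, m, ⟨-, rfl⟩, rfl⟩; rfl
    · rintro rfl; exact ⟨s, k, ⟨rfl, rfl⟩, rfl⟩
  exact (congrArg sInf this).trans (csInf_singleton _)

theorem mem_skel_torusPre_iff (hp : ∀ i, 3 ≤ p i) {x : Finset (∀ i, ZMod (p i))} {r : ℕ} :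
    x ∈ (torusPre p).skel r ↔ ∃ s k, x = torusCell p s k ∧ torusRank k = r := by
  constructor
  · rintro ⟨⟨s, k, rfl⟩, hr⟩
    exact ⟨s, k, rfl, (rk_torusCell hp s k).symm.trans hr⟩
  · rintro ⟨s, k, rfl, hr⟩
    exact ⟨⟨s, k, rfl⟩, (rk_torusCell hp s k).trans hr⟩

theorem torusCell_mem_skel_iff (hp : ∀ i, 3 ≤ p i) {s : ∀ i, ZMod (p i)} {k : Fin ℓ → Bool}
    {r : ℕ} : torusCell p s k ∈ (torusPre p).skel r ↔ torusRank k = r := by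
  rw [PreCC.skel, mem_ofPred_eq, rk_torusCell hp]
  exact and_iff_right ⟨s, k, rfl⟩

/-- A cell `t_m` of a torus, given by the integer offset `d` of `t` from a base node `s`. -/
abbrev LocalCell (ℓ : ℕ) := (Fin ℓ → ℤ) × (Fin ℓ → Bool)

def torusCellAt (p : Fin ℓ → ℕ) (s : ∀ i, ZMod (p i)) (q : LocalCell ℓ) :
    Finset (∀ i, ZMod (p i)) :=
  torusCell p (fun i => s i + q.1 i) q.2

def LocalLE (q₁ q₂ : LocalCell ℓ) : Prop :=
  ∀ i, SegLE (q₁.1 i) (q₁.2 i) (q₂.1 i) (q₂.2 i)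

theorem LocalLE.bounds {q₁ q₂ : LocalCell ℓ} (h : LocalLE q₁ q₂) (i : Fin ℓ) :
    q₂.1 i ≤ q₁.1 i ∧ q₁.1 i ≤ q₂.1 i + 1 :=
  (h i).int_bounds

theorem torusCellAt_zero (s : ∀ i, ZMod (p i)) (k : Fin ℓ → Bool) :
    torusCellAt p s (0, k) = torusCell p s k := by
  simp [torusCellAt]

theorem torusCellAt_subset_torusCellAt_iff (hp : ∀ i, 3 ≤ p i) (s : ∀ i, ZMod (p i))
    {q₁ q₂ : LocalCell ℓ} (h : ∀ i, q₂.1 i ≤ q₁.1 i ∧ q₁.1 i ≤ q₂.1 i + 1) :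
    torusCellAt p s q₁ ⊆ torusCellAt p s q₂ ↔ LocalLE q₁ q₂ := by
  rw [torusCellAt, torusCellAt, torusCell_subset_torusCell_iff hp]
  exact forall_congr' fun i => segLE_add_intCast_iff (le_trans (by norm_num) (hp i)) (s i) (h i)

theorem torusCellAt_subset_torusCellAt (hp : ∀ i, 3 ≤ p i) (s : ∀ i, ZMod (p i))
    {q₁ q₂ : LocalCell ℓ} (h : LocalLE q₁ q₂) :
    torusCellAt p s q₁ ⊆ torusCellAt p s q₂ :=
  (torusCellAt_subset_torusCellAt_iff hp s h.bounds).2 h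

theorem exists_offset_of_subset_torusCellAt (hp : ∀ i, 3 ≤ p i) (s : ∀ i, ZMod (p i))
    {t : ∀ i, ZMod (p i)} {m : Fin ℓ → Bool} {q : LocalCell ℓ}
    (h : torusCell p t m ⊆ torusCellAt p s q) :
    ∃ d : Fin ℓ → ℤ, t = (fun i => s i + d i) ∧ ∀ i, q.1 i ≤ d i ∧ d i ≤ q.1 i + 1 := by
  choose e he hte using fun i => ((torusCell_subset_torusCell_iff hp).1 h i).exists_eq_add_intCast
  refine ⟨fun i => q.1 i + e i, funext fun i => ?_, fun i => by dsimp only; have := he i; omega⟩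
  rw [hte i]
  push_cast
  ring

theorem exists_offset_of_torusCellAt_subset (hp : ∀ i, 3 ≤ p i) (s : ∀ i, ZMod (p i))
    {t : ∀ i, ZMod (p i)} {m : Fin ℓ → Bool} {q : LocalCell ℓ}
    (h : torusCellAt p s q ⊆ torusCell p t m) :
    ∃ d : Fin ℓ → ℤ, t = (fun i => s i + d i) ∧ ∀ i, d i ≤ q.1 i ∧ q.1 i ≤ d i + 1 := by
  choose e he hte using fun i => ((torusCell_subset_torusCell_iff hp).1 h i).exists_eq_add_intCast
  refine ⟨fun i => q.1 i - e i, funext fun i => ?_, fun i => by dsimp only; have := he i; omega⟩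
  push_cast
  linear_combination -hte i

theorem torusCellAt_injOn (hp : ∀ i, 3 ≤ p i) (s : ∀ i, ZMod (p i)) :
    InjOn (torusCellAt p s) {q | ∀ i, -1 ≤ q.1 i ∧ q.1 i ≤ 1} := by
  rintro ⟨d, k⟩ hd ⟨d', k'⟩ hd' h
  obtain ⟨hs, rfl⟩ := (torusCell_inj hp).1 h
  refine Prod.ext (funext fun i => ?_) rfl
  have hsi := congrFun hs i
  rw [add_right_inj] at hsi
  have := hp i
  have := hd i
  have := hd' i
  dsimp only at *
  exact (ZMod.intCast_eq_intCast_iff_of_abs_sub_lt (abs_sub_lt_iff.2 ⟨by omega, by omega⟩)).1 hsi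

/-- The `N`-neighborhood of `s_k` as offsets from `s` (`nbhd_torusCell`); it depends on neither
`p` nor `s`. -/
def localNbhd : NbhdKind → (Fin ℓ → Bool) → Set (LocalCell ℓ)
  | .adj r₁ r₂, k => {q | torusRank k = r₁ ∧ torusRank q.2 = r₁ ∧
      ∃ w : LocalCell ℓ, torusRank w.2 = r₂ ∧ LocalLE (0, k) w ∧ LocalLE q w}
  | .coadj r₁ r₂, k => {q | torusRank k = r₁ ∧ torusRank q.2 = r₁ ∧
      ∃ w : LocalCell ℓ, torusRank w.2 = r₂ ∧ LocalLE w (0, k) ∧ LocalLE w q}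
  | .inc r₁ r₂, k => {q | torusRank k = r₁ ∧ torusRank q.2 = r₂ ∧ LocalLE (0, k) q}
  | .coinc r₁ r₂, k => {q | torusRank k = r₁ ∧ torusRank q.2 = r₂ ∧ LocalLE q (0, k)}

theorem localNbhd_subset_bounded (N : NbhdKind) (k : Fin ℓ → Bool) :
    localNbhd N k ⊆ {q | ∀ i, -1 ≤ q.1 i ∧ q.1 i ≤ 1} := by
  intro q hq i
  cases N with
  | adj =>
    obtain ⟨-, -, w, -, hkw, hqw⟩ := hq
    have := hkw.bounds i
    have := hqw.bounds i
    dsimp only [Pi.zero_apply] at *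
    omega
  | coadj =>
    obtain ⟨-, -, w, -, hwk, hwq⟩ := hq
    have := hwk.bounds i
    have := hwq.bounds i
    dsimp only [Pi.zero_apply] at *
    omega
  | inc =>
    have := hq.2.2.bounds i
    dsimp only [Pi.zero_apply] at *
    omega
  | coinc =>
    have := hq.2.2.bounds i
    dsimp only [Pi.zero_apply] at *
    omega

theorem nbhd_adj_torusCell (hp : ∀ i, 3 ≤ p i) (s : ∀ i, ZMod (p i)) (k : Fin ℓ → Bool)
    (r₁ r₂ : ℕ) :
    (torusPre p).nbhd (.adj r₁ r₂) (torusCell p s k) =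
      torusCellAt p s '' localNbhd (.adj r₁ r₂) k := by
  ext y
  constructor
  · rintro ⟨hx, hy, z, hz, hxz, hyz⟩
    obtain ⟨u, m, rfl, hm⟩ := (mem_skel_torusPre_iff hp).1 hy
    obtain ⟨t, w, rfl, hw⟩ := (mem_skel_torusPre_iff hp).1 hz
    rw [← torusCellAt_zero s k] at hxz
    obtain ⟨dz, rfl, hdz⟩ := exists_offset_of_torusCellAt_subset hp s hxz
    obtain ⟨dy, rfl, hdy⟩ := exists_offset_of_subset_torusCellAt hp s (q := (dz, w)) hyz
    exact ⟨(dy, m), ⟨(torusCell_mem_skel_iff hp).1 hx, hm, (dz, w), hw,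
      (torusCellAt_subset_torusCellAt_iff hp s hdz).1 hxz,
      (torusCellAt_subset_torusCellAt_iff hp s hdy).1 hyz⟩, rfl⟩
  · rintro ⟨q, ⟨hk, hq, w, hw, hkw, hqw⟩, rfl⟩
    refine ⟨(torusCell_mem_skel_iff hp).2 hk, (torusCell_mem_skel_iff hp).2 hq,
      torusCellAt p s w, (torusCell_mem_skel_iff hp).2 hw, ?_,
      torusCellAt_subset_torusCellAt hp s hqw⟩
    exact torusCellAt_zero s k ▸ torusCellAt_subset_torusCellAt hp s hkw

theorem nbhd_coadj_torusCell (hp : ∀ i, 3 ≤ p i) (s : ∀ i, ZMod (p i)) (k : Fin ℓ → Bool)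
    (r₁ r₂ : ℕ) :
    (torusPre p).nbhd (.coadj r₁ r₂) (torusCell p s k) =
      torusCellAt p s '' localNbhd (.coadj r₁ r₂) k := by
  ext y
  constructor
  · rintro ⟨hx, hy, z, hz, hzx, hzy⟩
    obtain ⟨u, m, rfl, hm⟩ := (mem_skel_torusPre_iff hp).1 hy
    obtain ⟨t, w, rfl, hw⟩ := (mem_skel_torusPre_iff hp).1 hz
    rw [← torusCellAt_zero s k] at hzx
    obtain ⟨dz, rfl, hdz⟩ := exists_offset_of_subset_torusCellAt hp s hzx
    obtain ⟨dy, rfl, hdy⟩ := exists_offset_of_torusCellAt_subset hp s (q := (dz, w)) hzy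
    exact ⟨(dy, m), ⟨(torusCell_mem_skel_iff hp).1 hx, hm, (dz, w), hw,
      (torusCellAt_subset_torusCellAt_iff hp s hdz).1 hzx,
      (torusCellAt_subset_torusCellAt_iff hp s hdy).1 hzy⟩, rfl⟩
  · rintro ⟨q, ⟨hk, hq, w, hw, hwk, hwq⟩, rfl⟩
    refine ⟨(torusCell_mem_skel_iff hp).2 hk, (torusCell_mem_skel_iff hp).2 hq,
      torusCellAt p s w, (torusCell_mem_skel_iff hp).2 hw, ?_,
      torusCellAt_subset_torusCellAt hp s hwq⟩
    exact torusCellAt_zero s k ▸ torusCellAt_subset_torusCellAt hp s hwk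

theorem nbhd_inc_torusCell (hp : ∀ i, 3 ≤ p i) (s : ∀ i, ZMod (p i)) (k : Fin ℓ → Bool)
    (r₁ r₂ : ℕ) :
    (torusPre p).nbhd (.inc r₁ r₂) (torusCell p s k) =
      torusCellAt p s '' localNbhd (.inc r₁ r₂) k := by
  ext y
  constructor
  · rintro ⟨hx, hy, hxy⟩
    obtain ⟨u, m, rfl, hm⟩ := (mem_skel_torusPre_iff hp).1 hy
    rw [← torusCellAt_zero s k] at hxy
    obtain ⟨d, rfl, hd⟩ := exists_offset_of_torusCellAt_subset hp s hxy
    exact ⟨(d, m), ⟨(torusCell_mem_skel_iff hp).1 hx, hm,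
      (torusCellAt_subset_torusCellAt_iff hp s hd).1 hxy⟩, rfl⟩
  · rintro ⟨q, ⟨hk, hq, hkq⟩, rfl⟩
    exact ⟨(torusCell_mem_skel_iff hp).2 hk, (torusCell_mem_skel_iff hp).2 hq,
      torusCellAt_zero s k ▸ torusCellAt_subset_torusCellAt hp s hkq⟩

theorem nbhd_coinc_torusCell (hp : ∀ i, 3 ≤ p i) (s : ∀ i, ZMod (p i)) (k : Fin ℓ → Bool)
    (r₁ r₂ : ℕ) :
    (torusPre p).nbhd (.coinc r₁ r₂) (torusCell p s k) =
      torusCellAt p s '' localNbhd (.coinc r₁ r₂) k := by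
  ext y
  constructor
  · rintro ⟨hx, hy, hyx⟩
    obtain ⟨u, m, rfl, hm⟩ := (mem_skel_torusPre_iff hp).1 hy
    rw [← torusCellAt_zero s k] at hyx
    obtain ⟨d, rfl, hd⟩ := exists_offset_of_subset_torusCellAt hp s hyx
    exact ⟨(d, m), ⟨(torusCell_mem_skel_iff hp).1 hx, hm,
      (torusCellAt_subset_torusCellAt_iff hp s hd).1 hyx⟩, rfl⟩
  · rintro ⟨q, ⟨hk, hq, hqk⟩, rfl⟩
    exact ⟨(torusCell_mem_skel_iff hp).2 hk, (torusCell_mem_skel_iff hp).2 hq,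
      torusCellAt_zero s k ▸ torusCellAt_subset_torusCellAt hp s hqk⟩

theorem nbhd_torusCell (hp : ∀ i, 3 ≤ p i) (s : ∀ i, ZMod (p i)) (k : Fin ℓ → Bool)
    (N : NbhdKind) :
    (torusPre p).nbhd N (torusCell p s k) = torusCellAt p s '' localNbhd N k := by
  cases N with
  | adj r₁ r₂ => exact nbhd_adj_torusCell hp s k r₁ r₂
  | coadj r₁ r₂ => exact nbhd_coadj_torusCell hp s k r₁ r₂
  | inc r₁ r₂ => exact nbhd_inc_torusCell hp s k r₁ r₂
  | coinc r₁ r₂ => exact nbhd_coinc_torusCell hp s k r₁ r₂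

def TorusSameType (p p' : Fin ℓ → ℕ) (x : Finset (∀ i, ZMod (p i)))
    (x' : Finset (∀ i, ZMod (p' i))) : Prop :=
  ∃ s s' k, x = torusCell p s k ∧ x' = torusCell p' s' k

theorem isLocalBisimulation_torusSameType (hp : ∀ i, 3 ≤ p i) (hp' : ∀ i, 3 ≤ p' i) :
    IsLocalBisimulation (torusPre p) (torusPre p') (TorusSameType p p') := by
  rintro _ _ ⟨s, s', k, rfl, rfl⟩
  refine ⟨by rw [rk_torusCell hp, rk_torusCell hp'], fun N => ?_⟩
  rw [nbhd_torusCell hp, nbhd_torusCell hp']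
  exact matchedAlong_image ((torusCellAt_injOn hp s).mono (localNbhd_subset_bounded N k))
    ((torusCellAt_injOn hp' s').mono (localNbhd_subset_bounded N k))
    fun q _ => ⟨_, _, q.2, rfl, rfl⟩

theorem matchedAlong_torusPre_cells (hp : ∀ i, 3 ≤ p i) (hp' : ∀ i, 3 ≤ p' i)
    (e : (∀ i, ZMod (p i)) ≃ ∀ i, ZMod (p' i)) :
    MatchedAlong (TorusSameType p p') (torusPre p).cells (torusPre p').cells := by
  let E := e.prodCongr (Equiv.refl (Fin ℓ → Bool))
  rw [torusPre_cells, torusPre_cells, ← E.surjective.range_comp, ← image_univ, ← image_univ]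
  exact matchedAlong_image (torusCell_injective hp).injOn
    ((torusCell_injective hp').comp E.injective).injOn fun sk _ => ⟨_, _, sk.2, rfl, rfl⟩

end

/-- Tori with the same number of `0`-cells (`p₁⋯p_ℓ = p'₁⋯p'_ℓ`) and all cycle
lengths at least `3` are indistinguishable by every HOMP model. -/
theorem torus_homp_indistinguishable {ℓ : ℕ} (p p' : Fin ℓ → ℕ)
    (hp : ∀ j, 3 ≤ p j) (hp' : ∀ j, 3 ≤ p' j)
    (hcard : ∏ i, p i = ∏ i, p' i)
    {D : Type} {ℓ' : ℕ} (M : HOMP D ℓ') :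
    M.out (torusPre p) = M.out (torusPre p') := by
  have : ∀ i, NeZero (p i) := fun i => ⟨by have := hp i; omega⟩
  have : ∀ i, NeZero (p' i) := fun i => ⟨by have := hp' i; omega⟩
  have e : (∀ i, ZMod (p i)) ≃ ∀ i, ZMod (p' i) :=
    Fintype.equivOfCardEq (by simpa [Fintype.card_pi, ZMod.card] using hcard)
  exact M.out_eq_of_isLocalBisimulation (toFinite _)
    (isLocalBisimulation_torusSameType hp hp') (matchedAlong_torusPre_cells hp hp' e)

end TDL
end
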